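/- For each a, t ∈ F_q, the map Ψ_{a,t} defined by Ψ_{a,t}([m,b]) = [−m, b + am + t] on lines and Ψ_{a,t}((x,y)) = (−x + a, y + t) on points is an automorphism of the mixed graph G_q. -/

import Mathlib

/-- Incidence in the biaffine plane: the point `(x,y)` (as `Sum.inl`) lies on the
    line `[m,b]` (as `Sum.inr`) iff `y = m*x + b`; these are the undirected edges. -/
def MEdge (F : Type*) [Field F] (u v : (F × F) ⊕ (F × F)) : Prop :=
  ∃ p l : F × F, ((u = Sum.inl p ∧ v = Sum.inr l) ∨ (u = Sum.inr l ∧ v = Sum.inl p)) ∧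
    p.2 = l.1 * p.1 + l.2

/-- The arcs of G_q: `[m,b] → [m,b+i]` for `i ∈ M`, and `(x,y) → (x,y+j)` for `j ∈ -M`. -/
def MArc (F : Type*) [Field F] (M : Finset F) (u v : (F × F) ⊕ (F × F)) : Prop :=
  (∃ m b i : F, i ∈ M ∧ u = Sum.inr (m, b) ∧ v = Sum.inr (m, b + i)) ∨
  (∃ x y j : F, -j ∈ M ∧ u = Sum.inl (x, y) ∧ v = Sum.inl (x, y + j))

/-- The map Ψ_{a,t}: [m,b] ↦ [-m, b + a m + t] on lines, (x,y) ↦ (-x + a, y + t)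
    on points. -/
def psi (F : Type*) [Field F] (a t : F) : (F × F) ⊕ (F × F) → (F × F) ⊕ (F × F)
  | .inl (x, y) => .inl (-x + a, y + t)
  | .inr (m, b) => .inr (-m, b + a * m + t)

/-! Ψ_{a,-t} is a two-sided inverse of Ψ_{a,t}, so it suffices that every Ψ_{a,t} maps
edges to edges and arcs to arcs: applying Ψ_{a,-t} then gives the converse implications. -/

theorem Function.LeftInverse.rel_iff_of_map_rel {α : Type*} {r : α → α → Prop} {f g : α → α}
    (hgf : Function.LeftInverse g f) (hf : ∀ u v, r u v → r (f u) (f v))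
    (hg : ∀ u v, r u v → r (g u) (g v)) (u v : α) : r u v ↔ r (f u) (f v) :=
  ⟨hf u v, fun h => hgf u ▸ hgf v ▸ hg _ _ h⟩

section Psi

variable {F : Type*} [Field F]

theorem psi_neg_psi (a t : F) : Function.LeftInverse (psi F a (-t)) (psi F a t) := by
  rintro (⟨x, y⟩ | ⟨m, b⟩) <;>
    simp only [psi, Sum.inl.injEq, Sum.inr.injEq, Prod.mk.injEq] <;> constructor <;> ring

theorem psi_psi_neg (a t : F) : Function.LeftInverse (psi F a t) (psi F a (-t)) := by
  simpa using psi_neg_psi a (-t)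

theorem psi_bijective (a t : F) : Function.Bijective (psi F a t) :=
  ⟨(psi_neg_psi a t).injective, (psi_psi_neg a t).surjective⟩

-- `y + t = (-m) (-x + a) + (b + a m + t)` is `y = m x + b` shifted by `t`.
theorem MEdge.map_psi {a t : F} {u v : (F × F) ⊕ (F × F)} (h : MEdge F u v) :
    MEdge F (psi F a t u) (psi F a t v) := by
  obtain ⟨⟨x, y⟩, ⟨m, b⟩, hpos, hinc⟩ := h
  refine ⟨(-x + a, y + t), (-m, b + a * m + t), ?_, by linear_combination hinc⟩
  rcases hpos with ⟨rfl, rfl⟩ | ⟨rfl, rfl⟩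
  exacts [Or.inl ⟨rfl, rfl⟩, Or.inr ⟨rfl, rfl⟩]

theorem MArc.map_psi {M : Finset F} {a t : F} {u v : (F × F) ⊕ (F × F)} (h : MArc F M u v) :
    MArc F M (psi F a t u) (psi F a t v) := by
  rcases h with ⟨m, b, i, hi, rfl, rfl⟩ | ⟨x, y, j, hj, rfl, rfl⟩
  · exact Or.inl ⟨-m, b + a * m + t, i, hi, rfl, by simp only [psi, add_right_comm]⟩
  · exact Or.inr ⟨-x + a, y + t, j, hj, rfl, by simp only [psi, add_right_comm]⟩

end Psi

theorem psi_automorphism_general {F : Type*} [Field F]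
    (M : Finset F) (a t : F) :
    Function.Bijective (psi F a t) ∧
    (∀ u v, MEdge F u v ↔ MEdge F (psi F a t u) (psi F a t v)) ∧
    (∀ u v, MArc F M u v ↔ MArc F M (psi F a t u) (psi F a t v)) :=
  ⟨psi_bijective a t,
    (psi_neg_psi a t).rel_iff_of_map_rel (fun _ _ => MEdge.map_psi) (fun _ _ => MEdge.map_psi),
    (psi_neg_psi a t).rel_iff_of_map_rel (fun _ _ => MArc.map_psi) (fun _ _ => MArc.map_psi)⟩

/-- Ψ_{a,t} is an automorphism of the mixed graph G_q. -/
theorem psi_automorphism {F : Type*} [Field F] [Fintype F] [DecidableEq F]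
    (q : ℕ) (hq : Fintype.card F = q) (hodd : Odd q) (hpp : IsPrimePow q)
    (M : Finset F) (h0 : (0 : F) ∉ M) (hcard : M.card = (q - 1) / 2)
    (hsum : ∀ u ∈ M, ∀ v ∈ M, u + v ≠ 0) (a t : F) :
    Function.Bijective (psi F a t) ∧
    (∀ u v, MEdge F u v ↔ MEdge F (psi F a t u) (psi F a t v)) ∧
    (∀ u v, MArc F M u v ↔ MArc F M (psi F a t u) (psi F a t v)) :=
  psi_automorphism_general M a t
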